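/- arXiv:2007.03770 — 3 statements merged into one kernel-verified Lean document; each statement's English description precedes it below -/
import Mathlib

section
/- Under assumption (A1) (T_{−y}∘Q[φ] ≥ Q∘T_{−y}[φ] for y ≥ 0) and (A2) (Q is monotone on order intervals C_r), the maps Q₋[φ](θ,x) := lim_{y→−∞} (T_{−y}∘Q∘T_y)[φ](θ,x) and Q₊[φ](θ,x) := lim_{y→+∞} (T_{−y}∘Q∘T_y)[φ](θ,x) exist pointwise and satisfy: (i) T_y[Q±[φ]] = Q±[T_y[φ]] for all y ∈ ℝ and φ ∈ C₊ (translation invariance), and (ii) Q±[φ] ≤ Q±[ψ] pointwise whenever φ ≤ ψ in C₊ (monotonicity). -/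
/-!
Conjugating `Q` by translations gives the family `y ↦ T_{-y} ∘ Q ∘ T_y`, which (A1) makes
pointwise nondecreasing in `y`; since `Q` maps `C₊` to `C₊`, (A2) bounds the whole family between
`0` and `Q` of a constant, so `Q₋` and `Q₊` are its infimum and supremum. Conjugating `Q ∘ T_z`
only reindexes the family by `y ↦ y + z`, which gives translation invariance, and monotonicity
passes from each member of the family to its infimum and supremum.
-/

open Filter Topology

/-- Spatial translation operator: `(Tr y φ)(θ, x) = φ(θ, x - y)`. -/
def Tr {M E : Type*} (y : ℝ) (φ : M × ℝ → E) : M × ℝ → E := fun p => φ (p.1, p.2 - y)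

/-- Membership in the cone `C₊`: nonnegative and bounded above. -/
def Cpos {M : Type*} {N : ℕ} (φ : M × ℝ → Fin N → ℝ) : Prop :=
  0 ≤ φ ∧ ∃ b : ℝ, ∀ p i, φ p i ≤ b

section Translation

variable {M E : Type*}

@[simp]
lemma Tr_apply (y : ℝ) (φ : M × ℝ → E) (p : M × ℝ) : Tr y φ p = φ (p.1, p.2 - y) := rfl

lemma Tr_Tr (a b : ℝ) (φ : M × ℝ → E) : Tr a (Tr b φ) = Tr (a + b) φ := by
  funext p
  simp [sub_sub]

lemma Tr_mono [Preorder E] (a : ℝ) : Monotone (Tr a : (M × ℝ → E) → M × ℝ → E) :=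
  fun _ _ h _ => h _

lemma Tr_iInf [InfSet E] {ι : Sort*} (a : ℝ) (F : ι → M × ℝ → E) :
    Tr a (⨅ i, F i) = ⨅ i, Tr a (F i) := by
  funext p
  simp [iInf_apply]

lemma Tr_iSup [SupSet E] {ι : Sort*} (a : ℝ) (F : ι → M × ℝ → E) :
    Tr a (⨆ i, F i) = ⨆ i, Tr a (F i) := by
  funext p
  simp [iSup_apply]

/-- `T_{-y} ∘ Q ∘ T_y`. -/
def conjTr (Q : (M × ℝ → E) → M × ℝ → E) (y : ℝ) (φ : M × ℝ → E) : M × ℝ → E :=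
  Tr (-y) (Q (Tr y φ))

lemma conjTr_Tr (Q : (M × ℝ → E) → M × ℝ → E) (y z : ℝ) (φ : M × ℝ → E) :
    conjTr Q y (Tr z φ) = Tr z (conjTr Q (y + z) φ) := by
  simp only [conjTr, Tr_Tr]
  congr 1
  ring

lemma iInf_conjTr_Tr [InfSet E] (Q : (M × ℝ → E) → M × ℝ → E) (z : ℝ) (φ : M × ℝ → E) :
    ⨅ y, conjTr Q y (Tr z φ) = Tr z (⨅ y, conjTr Q y φ) := by
  simp only [conjTr_Tr, Tr_iInf]
  exact (Equiv.addRight z).iInf_comp (g := fun y => Tr z (conjTr Q y φ))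

lemma iSup_conjTr_Tr [SupSet E] (Q : (M × ℝ → E) → M × ℝ → E) (z : ℝ) (φ : M × ℝ → E) :
    ⨆ y, conjTr Q y (Tr z φ) = Tr z (⨆ y, conjTr Q y φ) := by
  simp only [conjTr_Tr, Tr_iSup]
  exact (Equiv.addRight z).iSup_comp (g := fun y => Tr z (conjTr Q y φ))

end Translation

section Cone

variable {M : Type*} {N : ℕ}

lemma Cpos.tr {φ : M × ℝ → Fin N → ℝ} (hφ : Cpos φ) (a : ℝ) : Cpos (Tr a φ) :=
  ⟨fun p => hφ.1 (p.1, p.2 - a), hφ.2.imp fun _ hb _ => hb _⟩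

lemma Cpos.const {c : ℝ} (hc : 0 ≤ c) : Cpos (fun (_ : M × ℝ) (_ : Fin N) => c) :=
  ⟨fun _ _ => hc, c, fun _ _ => le_rfl⟩

lemma Cpos.le_const {φ : M × ℝ → Fin N → ℝ} (hφ : Cpos φ) :
    ∃ c : ℝ, 0 ≤ c ∧ φ ≤ fun _ _ => c := by
  obtain ⟨b, hb⟩ := hφ.2
  exact ⟨max b 0, le_max_right _ _, fun p i => (hb p i).trans (le_max_left _ _)⟩

/-- Assumption (A1). -/
def TranslationSubinvariant (Q : (M × ℝ → Fin N → ℝ) → M × ℝ → Fin N → ℝ) : Prop :=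
  ∀ φ, Cpos φ → ∀ y : ℝ, 0 ≤ y → Q (Tr (-y) φ) ≤ Tr (-y) (Q φ)

/-- Assumption (A2). -/
def MonotoneOnOrderIntervals (Q : (M × ℝ → Fin N → ℝ) → M × ℝ → Fin N → ℝ) : Prop :=
  ∀ r : Fin N → ℝ, (∀ i, 0 < r i) →
    ∀ φ ψ : M × ℝ → Fin N → ℝ, 0 ≤ φ → φ ≤ ψ → (∀ p, ψ p ≤ r) → Q φ ≤ Q ψ

variable {Q : (M × ℝ → Fin N → ℝ) → M × ℝ → Fin N → ℝ}

lemma MonotoneOnOrderIntervals.le_of_le (hA2 : MonotoneOnOrderIntervals Q)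
    {φ ψ : M × ℝ → Fin N → ℝ} (hφ : 0 ≤ φ) (hψ : Cpos ψ) (h : φ ≤ ψ) : Q φ ≤ Q ψ := by
  obtain ⟨c, hc, hψc⟩ := hψ.le_const
  exact hA2 (fun _ => c + 1) (fun _ => by linarith) φ ψ hφ h
    fun p i => (hψc p i).trans (by linarith)

lemma conjTr_mono (hA2 : MonotoneOnOrderIntervals Q) (y : ℝ) {φ ψ : M × ℝ → Fin N → ℝ}
    (hφ : 0 ≤ φ) (hψ : Cpos ψ) (h : φ ≤ ψ) : conjTr Q y φ ≤ conjTr Q y ψ :=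
  Tr_mono _ (hA2.le_of_le (fun p => hφ (p.1, p.2 - y)) (hψ.tr y) (Tr_mono y h))

lemma TranslationSubinvariant.monotone_conjTr (hA1 : TranslationSubinvariant Q)
    {φ : M × ℝ → Fin N → ℝ} (hφ : Cpos φ) : Monotone fun y => conjTr Q y φ := by
  intro y y' hyy'
  have h := Tr_mono (-y) (hA1 (Tr y' φ) (hφ.tr y') (y' - y) (by linarith))
  rwa [Tr_Tr, Tr_Tr, show -(y' - y) + y' = y by ring, show -y + -(y' - y) = -y' by ring] at h

lemma bddBelow_range_conjTr (hQ : ∀ φ, Cpos φ → Cpos (Q φ)) {φ : M × ℝ → Fin N → ℝ}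
    (hφ : Cpos φ) : BddBelow (Set.range fun y => conjTr Q y φ) :=
  ⟨0, by
    rintro _ ⟨y, rfl⟩
    exact ((hQ _ (hφ.tr y)).tr (-y)).1⟩

lemma bddAbove_range_conjTr (hQ : ∀ φ, Cpos φ → Cpos (Q φ)) (hA2 : MonotoneOnOrderIntervals Q)
    {φ : M × ℝ → Fin N → ℝ} (hφ : Cpos φ) : BddAbove (Set.range fun y => conjTr Q y φ) := by
  obtain ⟨c, hc, hφc⟩ := hφ.le_const
  obtain ⟨B, hB⟩ := (hQ _ (Cpos.const (M := M) (N := N) hc)).2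
  refine ⟨fun _ _ => B, ?_⟩
  rintro _ ⟨y, rfl⟩ p i
  exact (hA2.le_of_le (hφ.tr y).1 (Cpos.const hc) (fun _ => hφc _) _ i).trans (hB _ i)

end Cone

theorem stmt1_general {M : Type*} {N : ℕ}
    (Q : (M × ℝ → Fin N → ℝ) → (M × ℝ → Fin N → ℝ))
    (hQmem : ∀ φ, Cpos φ → Cpos (Q φ))
    (hA1 : ∀ φ : M × ℝ → Fin N → ℝ, Cpos φ →
      ∀ y : ℝ, 0 ≤ y → Q (Tr (-y) φ) ≤ Tr (-y) (Q φ))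
    (hA2 : ∀ r : Fin N → ℝ, (∀ i, 0 < r i) →
      ∀ φ ψ : M × ℝ → Fin N → ℝ, 0 ≤ φ → φ ≤ ψ → (∀ p, ψ p ≤ r) → Q φ ≤ Q ψ) :
    ∃ Qm Qp : (M × ℝ → Fin N → ℝ) → (M × ℝ → Fin N → ℝ),
      (∀ φ, Cpos φ → ∀ θ x, Tendsto (fun y : ℝ => Tr (-y) (Q (Tr y φ)) (θ, x))
        atBot (nhds (Qm φ (θ, x)))) ∧
      (∀ φ, Cpos φ → ∀ θ x, Tendsto (fun y : ℝ => Tr (-y) (Q (Tr y φ)) (θ, x))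
        atTop (nhds (Qp φ (θ, x)))) ∧
      (∀ y : ℝ, ∀ φ, Cpos φ → Tr y (Qm φ) = Qm (Tr y φ) ∧ Tr y (Qp φ) = Qp (Tr y φ)) ∧
      (∀ φ ψ, Cpos φ → Cpos ψ → φ ≤ ψ → Qm φ ≤ Qm ψ ∧ Qp φ ≤ Qp ψ) := by
  have hA1 : TranslationSubinvariant Q := hA1
  have hA2 : MonotoneOnOrderIntervals Q := hA2
  refine ⟨fun φ => ⨅ y, conjTr Q y φ, fun φ => ⨆ y, conjTr Q y φ, ?_, ?_, ?_, ?_⟩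
  · intro φ hφ θ x
    exact tendsto_pi_nhds.1
      (tendsto_atBot_ciInf (hA1.monotone_conjTr hφ) (bddBelow_range_conjTr hQmem hφ)) (θ, x)
  · intro φ hφ θ x
    exact tendsto_pi_nhds.1
      (tendsto_atTop_ciSup (hA1.monotone_conjTr hφ) (bddAbove_range_conjTr hQmem hA2 hφ)) (θ, x)
  · intro y φ _
    exact ⟨(iInf_conjTr_Tr Q y φ).symm, (iSup_conjTr_Tr Q y φ).symm⟩
  · intro φ ψ hφ hψ h
    have hle : ∀ y, conjTr Q y φ ≤ conjTr Q y ψ := fun y => conjTr_mono hA2 y hφ.1 hψ h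
    exact ⟨ciInf_mono (bddBelow_range_conjTr hQmem hφ) hle,
      ciSup_mono (bddAbove_range_conjTr hQmem hA2 hψ) hle⟩

/-- Under (A1) and (A2), the pointwise limits `Q₋` (as `y → -∞`) and `Q₊` (as `y → +∞`)
of `T_{-y} ∘ Q ∘ T_y` exist, commute with all spatial translations, and are monotone. -/
theorem stmt1 {M : Type*} [TopologicalSpace M] [CompactSpace M] {N : ℕ}
    (Q : (M × ℝ → Fin N → ℝ) → (M × ℝ → Fin N → ℝ))
    (hQmem : ∀ φ, Cpos φ → Cpos (Q φ))
    (hA1 : ∀ φ : M × ℝ → Fin N → ℝ, Cpos φ →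
      ∀ y : ℝ, 0 ≤ y → Q (Tr (-y) φ) ≤ Tr (-y) (Q φ))
    (hA2 : ∀ r : Fin N → ℝ, (∀ i, 0 < r i) →
      ∀ φ ψ : M × ℝ → Fin N → ℝ, 0 ≤ φ → φ ≤ ψ → (∀ p, ψ p ≤ r) → Q φ ≤ Q ψ) :
    ∃ Qm Qp : (M × ℝ → Fin N → ℝ) → (M × ℝ → Fin N → ℝ),
      (∀ φ, Cpos φ → ∀ θ x, Tendsto (fun y : ℝ => Tr (-y) (Q (Tr y φ)) (θ, x))
        atBot (nhds (Qm φ (θ, x)))) ∧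
      (∀ φ, Cpos φ → ∀ θ x, Tendsto (fun y : ℝ => Tr (-y) (Q (Tr y φ)) (θ, x))
        atTop (nhds (Qp φ (θ, x)))) ∧
      (∀ y : ℝ, ∀ φ, Cpos φ → Tr y (Qm φ) = Qm (Tr y φ) ∧ Tr y (Qp φ) = Qp (Tr y φ)) ∧
      (∀ φ ψ, Cpos φ → Cpos ψ → φ ≤ ψ → Qm φ ≤ Qm ψ ∧ Qp φ ≤ Qp ψ) :=
  stmt1_general Q hQmem hA1 hA2
end

section
/- Let W, W̃ : ℝ → (0,∞) be C² solutions of d·W'' + k*W − K W² = 0 on (−∞, α*] with W(−∞) = W̃(−∞) = 0 and W'(−∞) = W̃'(−∞) = 0, where d, K > 0 and k* ≤ 0. If W ≥ W̃ on (−∞, α*], W(α*) = W̃(α*), and W'(α*) ≤ W̃'(α*), then W ≡ W̃ on (−∞, α*]. -/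
/-!
The Wronskian `G = W' V - V' W` of two solutions satisfies `d G' = K W V (W - V) ≥ 0`, so `G`
increases from its limit `0` at `-∞` up to `G(α*) = W(α*) (W'(α*) - V'(α*)) ≤ 0`. Hence `G ≡ 0`
on `(-∞, α*]`, so `G' = 0` there, and positivity of `W, V` forces `W = V`.
-/

open Filter Topology Set

section Wronskian

variable {f f' f'' g g' g'' : ℝ → ℝ} {x : ℝ}

theorem hasDerivAt_wronskian (hf : HasDerivAt f (f' x) x) (hf' : HasDerivAt f' (f'' x) x)
    (hg : HasDerivAt g (g' x) x) (hg' : HasDerivAt g' (g'' x) x) :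
    HasDerivAt (fun y => f' y * g y - g' y * f y) (f'' x * g x - g'' x * f x) x :=
  ((hf'.mul hg).sub (hg'.mul hf)).congr_deriv (by ring)

theorem wronskian_deriv_eq_of_logistic {d k K u u'' v v'' : ℝ} (hd : d ≠ 0)
    (hu : d * u'' + k * u - K * u ^ 2 = 0) (hv : d * v'' + k * v - K * v ^ 2 = 0) :
    u'' * v - v'' * u = K / d * (u * v * (u - v)) := by
  field_simp
  linear_combination v * hu - u * hv

end Wronskian

section HalfLine

variable {G G' : ℝ → ℝ} {a x : ℝ}

theorem monotoneOn_Iic_of_hasDerivAt_nonneg (hG : ∀ x ≤ a, HasDerivAt G (G' x) x)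
    (hG' : ∀ x ≤ a, 0 ≤ G' x) : MonotoneOn G (Iic a) := by
  refine monotoneOn_of_hasDerivWithinAt_nonneg (f' := G') (convex_Iic a)
    (fun x hx => (hG x hx).continuousAt.continuousWithinAt) (fun x hx => ?_) (fun x hx => ?_)
  all_goals rw [interior_Iic] at hx
  · exact (hG x hx.le).hasDerivWithinAt
  · exact hG' x hx.le

theorem eq_zero_of_monotoneOn_Iic_of_tendsto_atBot (hG : MonotoneOn G (Iic a))
    (hlim : Tendsto G atBot (𝓝 0)) (ha : G a ≤ 0) : ∀ x ≤ a, G x = 0 := by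
  intro x hx
  have hle : G x ≤ 0 := (hG hx self_mem_Iic hx).trans ha
  have hge : 0 ≤ G x := le_of_tendsto hlim <| by
    filter_upwards [eventually_le_atBot x] with y hy
    exact hG (hy.trans hx) hx hy
  exact le_antisymm hle hge

theorem HasDerivAt.eq_zero_of_forall_le_eq_zero {c : ℝ} (hG : HasDerivAt G c x)
    (hzero : ∀ y ≤ a, G y = 0) (hx : x < a) : c = 0 := by
  have hloc : G =ᶠ[𝓝 x] fun _ => 0 := by
    filter_upwards [Iio_mem_nhds hx] with y hy
    exact hzero y hy.le
  exact hG.unique ((hasDerivAt_const x 0).congr_of_eventuallyEq hloc)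

end HalfLine

theorem stmt11_general (d K kstar αstar : ℝ) (hd : 0 < d) (hK : 0 < K)
    (W W' W'' V V' V'' : ℝ → ℝ)
    (hWd : ∀ x ≤ αstar, HasDerivAt W (W' x) x ∧ HasDerivAt W' (W'' x) x)
    (hVd : ∀ x ≤ αstar, HasDerivAt V (V' x) x ∧ HasDerivAt V' (V'' x) x)
    (hWpos : ∀ x ≤ αstar, 0 < W x) (hVpos : ∀ x ≤ αstar, 0 < V x)
    (hWeq : ∀ x ≤ αstar, d * W'' x + kstar * W x - K * (W x) ^ 2 = 0)
    (hVeq : ∀ x ≤ αstar, d * V'' x + kstar * V x - K * (V x) ^ 2 = 0)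
    (hW0 : Tendsto W atBot (nhds 0)) (hW'0 : Tendsto W' atBot (nhds 0))
    (hV0 : Tendsto V atBot (nhds 0)) (hV'0 : Tendsto V' atBot (nhds 0))
    (hge : ∀ x ≤ αstar, V x ≤ W x)
    (hbd : W αstar = V αstar) (hbd' : W' αstar ≤ V' αstar) :
    ∀ x ≤ αstar, W x = V x := by
  set G : ℝ → ℝ := fun x => W' x * V x - V' x * W x
  have hG : ∀ x ≤ αstar, HasDerivAt G (K / d * (W x * V x * (W x - V x))) x := fun x hx => by
    rw [← wronskian_deriv_eq_of_logistic hd.ne' (hWeq x hx) (hVeq x hx)]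
    exact hasDerivAt_wronskian (hWd x hx).1 (hWd x hx).2 (hVd x hx).1 (hVd x hx).2
  have hG' : ∀ x ≤ αstar, 0 ≤ K / d * (W x * V x * (W x - V x)) := fun x hx => by
    have := sub_nonneg.2 (hge x hx)
    have := hWpos x hx
    have := hVpos x hx
    positivity
  have hlim : Tendsto G atBot (𝓝 0) := by simpa using (hW'0.mul hV0).sub (hV'0.mul hW0)
  have hGa : G αstar ≤ 0 := by
    have : G αstar = (W' αstar - V' αstar) * V αstar := by simp only [G, hbd]; ring
    exact this ▸ mul_nonpos_of_nonpos_of_nonneg (by linarith) (hVpos αstar le_rfl).le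
  have hzero := eq_zero_of_monotoneOn_Iic_of_tendsto_atBot
    (monotoneOn_Iic_of_hasDerivAt_nonneg hG hG') hlim hGa
  intro x hx
  rcases hx.eq_or_lt with rfl | hlt
  · exact hbd
  have h := (hG x hx).eq_zero_of_forall_le_eq_zero hzero hlt
  simpa [hK.ne', hd.ne', (hWpos x hx).ne', (hVpos x hx).ne', sub_eq_zero] using h

/-- Sturm-type comparison: if `W, W̃` are positive `C²` solutions of
`d W'' + k* W − K W² = 0` on `(−∞, α*]` with vanishing limits of the functions and their
derivatives at `−∞`, `W ≥ W̃` on `(−∞, α*]`, `W(α*) = W̃(α*)` and `W'(α*) ≤ W̃'(α*)`,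
then `W ≡ W̃` on `(−∞, α*]`. -/
theorem stmt11 (d K kstar αstar : ℝ) (hd : 0 < d) (hK : 0 < K) (hk : kstar ≤ 0)
    (W W' W'' V V' V'' : ℝ → ℝ)
    (hWd : ∀ x ≤ αstar, HasDerivAt W (W' x) x ∧ HasDerivAt W' (W'' x) x)
    (hVd : ∀ x ≤ αstar, HasDerivAt V (V' x) x ∧ HasDerivAt V' (V'' x) x)
    (hWpos : ∀ x ≤ αstar, 0 < W x) (hVpos : ∀ x ≤ αstar, 0 < V x)
    (hWeq : ∀ x ≤ αstar, d * W'' x + kstar * W x - K * (W x) ^ 2 = 0)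
    (hVeq : ∀ x ≤ αstar, d * V'' x + kstar * V x - K * (V x) ^ 2 = 0)
    (hW0 : Tendsto W atBot (nhds 0)) (hW'0 : Tendsto W' atBot (nhds 0))
    (hV0 : Tendsto V atBot (nhds 0)) (hV'0 : Tendsto V' atBot (nhds 0))
    (hge : ∀ x ≤ αstar, V x ≤ W x)
    (hbd : W αstar = V αstar) (hbd' : W' αstar ≤ V' αstar) :
    ∀ x ≤ αstar, W x = V x :=
  stmt11_general d K kstar αstar hd hK W W' W'' V V' V'' hWd hVd hWpos hVpos hWeq hVeq hW0 hW'0 hV0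
    hV'0 hge hbd hbd'
end

section
/- Let h₊^∞ : ℝ₊ → ℝ be a KPP nonlinearity with unique positive zero u₊* (h₊^∞(0) = 0, (h₊^∞)'(0) > 0, h₊^∞(u)(u − u₊*) < 0 for u ∈ (0,∞)∖{u₊*}). If ψ : ℝ → (0,∞) is a bounded C² solution of d·ψ'' + h₊^∞(ψ) = 0 on all of ℝ with inf ψ > 0, then ψ ≡ u₊*. -/
/-!
The equation makes `ψ` strictly concave where `ψ < u₊*` and strictly convex where
`ψ > u₊*`. If `ψ(x₁) < u₊*`, follow `ψ` in a direction in which it does not increase: its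
slope keeps decreasing, so `ψ` never climbs back to `u₊*` (a first-exit argument), stays
concave from then on, and its slope ends up below a negative constant, so `ψ` is unbounded
below. Symmetrically, `ψ(x₁) > u₊*` forces `ψ` to be unbounded above.
-/

open Set

section ConcaveBelowLevel

variable {f f' f'' : ℝ → ℝ}

theorem not_bddBelow_range_of_deriv_le_neg (hf : ∀ x, HasDerivAt f (f' x) x) {b ε : ℝ}
    (hε : 0 < ε) (hle : ∀ x, b ≤ x → f' x ≤ -ε) : ¬BddBelow (range f) := by
  rintro ⟨m, hm⟩
  have hdecay : ∀ x, b ≤ x → f x - f b ≤ -ε * (x - b) := fun x hx =>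
    (convex_Ici b).image_sub_le_mul_sub_of_deriv_le
      (fun y _ => (hf y).continuousAt.continuousWithinAt)
      (fun y _ => (hf y).differentiableAt.differentiableWithinAt)
      (fun y hy => (hf y).deriv ▸ hle y (interior_subset hy)) b self_mem_Ici x hx hx
  have hfb : m ≤ f b := hm (mem_range_self b)
  set x := b + (f b - m + 1) / ε with hx
  have hεx : ε * (x - b) = f b - m + 1 := by
    rw [hx, add_sub_cancel_left, mul_div_cancel₀ _ hε.ne']
  have := hdecay x (le_add_of_nonneg_right (by positivity))
  have := hm (mem_range_self x)
  linarith

theorem lt_of_deriv2_neg_of_lt (hf : ∀ x, HasDerivAt f (f' x) x)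
    (hf' : ∀ x, HasDerivAt f' (f'' x) x) {c a : ℝ} (hconc : ∀ x, f x < c → f'' x < 0)
    (ha : f a < c) (ha' : f' a ≤ 0) {x : ℝ} (hx : a ≤ x) : f x < c := by
  by_contra! hcx
  have hfc : Continuous f := continuous_iff_continuousAt.2 fun y => (hf y).continuousAt
  have hf'c : Continuous f' :=
    continuous_iff_continuousAt.2 fun y => (hf' y).continuousAt
  obtain ⟨t, ⟨⟨hat, htx⟩, hct⟩, hleast⟩ : ∃ t, IsLeast (Icc a x ∩ f ⁻¹' Ici c) t :=
    (isCompact_Icc.inter_right (isClosed_Ici.preimage hfc)).exists_isLeast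
      ⟨x, ⟨hx, le_rfl⟩, hcx⟩
  have hbelow : ∀ y ∈ Ioo a t, f y < c := fun y hy => by
    by_contra! hcy
    exact (hleast ⟨⟨hy.1.le, hy.2.le.trans htx⟩, hcy⟩).not_gt hy.2
  have hslope : StrictAntiOn f' (Icc a t) :=
    strictAntiOn_of_hasDerivWithinAt_neg (convex_Icc a t) hf'c.continuousOn
      (fun y _ => (hf' y).hasDerivWithinAt)
      fun y hy => hconc y (hbelow y (by rwa [interior_Icc] at hy))
  have hdecr : AntitoneOn f (Icc a t) :=
    antitoneOn_of_hasDerivWithinAt_nonpos (convex_Icc a t) hfc.continuousOn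
      (fun y _ => (hf y).hasDerivWithinAt) fun y hy => by
        rw [interior_Icc] at hy
        exact (hslope ⟨le_rfl, hat⟩ (Ioo_subset_Icc_self hy) hy.1).le.trans ha'
  exact (hct : c ≤ f t).not_gt ((hdecr ⟨le_rfl, hat⟩ ⟨hat, le_rfl⟩ hat).trans_lt ha)

theorem not_bddBelow_range_of_deriv2_neg_of_deriv_nonpos (hf : ∀ x, HasDerivAt f (f' x) x)
    (hf' : ∀ x, HasDerivAt f' (f'' x) x) {c a : ℝ} (hconc : ∀ x, f x < c → f'' x < 0)
    (ha : f a < c) (ha' : f' a ≤ 0) : ¬BddBelow (range f) := by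
  have hf'c : Continuous f' := continuous_iff_continuousAt.2 fun y => (hf' y).continuousAt
  have hslope : StrictAntiOn f' (Ici a) :=
    strictAntiOn_of_hasDerivWithinAt_neg (convex_Ici a) hf'c.continuousOn
      (fun y _ => (hf' y).hasDerivWithinAt)
      fun y hy => hconc y (lt_of_deriv2_neg_of_lt hf hf' hconc ha ha' (interior_subset hy))
  have hstep : f' (a + 1) < f' a := hslope self_mem_Ici (by simp) (lt_add_one a)
  refine not_bddBelow_range_of_deriv_le_neg hf (b := a + 1) (ε := -f' (a + 1))
    (by linarith) fun x hx => ?_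
  have := hslope.antitoneOn (show a ≤ a + 1 by linarith) (show a ≤ x by linarith) hx
  linarith

theorem not_bddBelow_range_of_deriv2_neg_of_lt (hf : ∀ x, HasDerivAt f (f' x) x)
    (hf' : ∀ x, HasDerivAt f' (f'' x) x) {c a : ℝ} (hconc : ∀ x, f x < c → f'' x < 0)
    (ha : f a < c) : ¬BddBelow (range f) := by
  rcases le_or_gt (f' a) 0 with ha' | ha'
  · exact not_bddBelow_range_of_deriv2_neg_of_deriv_nonpos hf hf' hconc ha ha'
  · rw [← neg_surjective.range_comp f]
    refine not_bddBelow_range_of_deriv2_neg_of_deriv_nonpos (f' := fun x => -f' (-x))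
      (f'' := fun x => f'' (-x)) (a := -a) (fun x => ?_) (fun x => ?_) (fun x => hconc (-x))
      (by simpa using ha) (by simpa using ha'.le)
    · simpa using (hf (-x)).scomp x (hasDerivAt_neg x)
    · simpa using ((hf' (-x)).scomp x (hasDerivAt_neg x)).fun_neg

end ConcaveBelowLevel

theorem stmt12_general (d ustar : ℝ) (hd : 0 < d)
    (h : ℝ → ℝ)
    (hsign : ∀ u : ℝ, 0 < u → u ≠ ustar → h u * (u - ustar) < 0)
    (ψ ψ' ψ'' : ℝ → ℝ)
    (hψd : ∀ x : ℝ, HasDerivAt ψ (ψ' x) x ∧ HasDerivAt ψ' (ψ'' x) x)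
    (heq : ∀ x : ℝ, d * ψ'' x + h (ψ x) = 0)
    (hbdd : ∃ B : ℝ, ∀ x : ℝ, ψ x ≤ B)
    (hinf : ∃ m : ℝ, 0 < m ∧ ∀ x : ℝ, m ≤ ψ x) :
    ∀ x : ℝ, ψ x = ustar := by
  obtain ⟨B, hB⟩ := hbdd
  obtain ⟨m, hm, hmψ⟩ := hinf
  have hψ : ∀ x, HasDerivAt ψ (ψ' x) x := fun x => (hψd x).1
  have hψ' : ∀ x, HasDerivAt ψ' (ψ'' x) x := fun x => (hψd x).2
  have hcurv : ∀ x, ψ x ≠ ustar → 0 < ψ'' x * (ψ x - ustar) := fun x hx => by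
    have hpos : 0 < d * (ψ'' x * (ψ x - ustar)) := by
      have hdψ'' : d * (ψ'' x * (ψ x - ustar)) = -(h (ψ x) * (ψ x - ustar)) := by
        linear_combination (ψ x - ustar) * heq x
      linarith [hsign (ψ x) (hm.trans_le (hmψ x)) hx]
    exact pos_of_mul_pos_right hpos hd.le
  intro x
  by_contra hne
  rcases lt_or_gt_of_ne hne with hlt | hgt
  · exact not_bddBelow_range_of_deriv2_neg_of_lt hψ hψ'
      (fun y hy => neg_of_mul_pos_left (hcurv y hy.ne) (by linarith)) hlt
      ⟨m, forall_mem_range.2 hmψ⟩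
  · exact not_bddBelow_range_of_deriv2_neg_of_lt (f := fun y => -ψ y) (c := -ustar)
      (fun y => (hψ y).neg) (fun y => (hψ' y).neg)
      (fun y hy => neg_neg_of_pos (pos_of_mul_pos_left (hcurv y (by linarith)) (by linarith)))
      (neg_lt_neg hgt) ⟨-B, forall_mem_range.2 fun y => neg_le_neg (hB y)⟩

/-- KPP rigidity: if `h` is a KPP nonlinearity with unique positive zero `u₊*`
(`h(0) = 0`, `h'(0) > 0`, `h(u)(u − u₊*) < 0` for `u ∈ (0,∞)∖{u₊*}`), and `ψ` is a
bounded entire positive `C²` solution of `d ψ'' + h(ψ) = 0` on `ℝ` with `inf ψ > 0`,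
then `ψ ≡ u₊*`. -/
theorem stmt12 (d ustar : ℝ) (hd : 0 < d) (hu : 0 < ustar)
    (h : ℝ → ℝ) (hC1 : ContDiffOn ℝ 1 h (Set.Ici (0:ℝ)))
    (h0 : h 0 = 0) (h'0 : 0 < derivWithin h (Set.Ici (0:ℝ)) 0)
    (hsign : ∀ u : ℝ, 0 < u → u ≠ ustar → h u * (u - ustar) < 0)
    (ψ ψ' ψ'' : ℝ → ℝ)
    (hψd : ∀ x : ℝ, HasDerivAt ψ (ψ' x) x ∧ HasDerivAt ψ' (ψ'' x) x)
    (heq : ∀ x : ℝ, d * ψ'' x + h (ψ x) = 0)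
    (hbdd : ∃ B : ℝ, ∀ x : ℝ, ψ x ≤ B)
    (hinf : ∃ m : ℝ, 0 < m ∧ ∀ x : ℝ, m ≤ ψ x) :
    ∀ x : ℝ, ψ x = ustar :=
  stmt12_general d ustar hd h hsign ψ ψ' ψ'' hψd heq hbdd hinf
end
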